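/- Let y: [0, ∞) → [0, ∞) be continuous, K: [0, ∞) → [0, ∞) locally integrable, and M a continuous real martingale with M_0 = 0, such that almost surely y_t ≤ M_t + ∫_0^t K_s y_s ds for all t. If y is nonnegative and adapted, then almost surely y_t = 0 for all t ≥ 0. -/

import Mathlib

/-!
Let `τ` be the end of the initial stretch on which `y` vanishes. Right after `τ` the mass of `K`
is as small as we like, so while `y` climbs from `0` to a small level `2a` the integral term is
a small multiple of `a`, and `M` reaches `a` before it drops below `-c a`. If `y` is not
identically zero this happens for every small `a`. For a continuous martingale started at `0`,
however, the probability of reaching `a` before `-c a` is at most `c / (1 + c)`, by optional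
stopping at the exit time of `(-c a, a)`, approximated from above by dyadic stopping times.
Letting `c → 0` gives the claim.
-/

open MeasureTheory Filter Set
open scoped Topology

theorem ContinuousOn.exists_mem_Ioc_eq_and_forall_lt {f : ℝ → ℝ} {p q c : ℝ} (hpq : p ≤ q)
    (hf : ContinuousOn f (Icc p q)) (hp : f p < c) (hq : c ≤ f q) :
    ∃ σ ∈ Ioc p q, f σ = c ∧ ∀ s ∈ Ico p σ, f s < c := by
  set S := Icc p q ∩ f ⁻¹' Ici c
  have hS : IsClosed S := hf.preimage_isClosed_of_isClosed isClosed_Icc isClosed_Ici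
  have hσ : sInf S ∈ S := hS.csInf_mem ⟨q, ⟨hpq, le_rfl⟩, hq⟩ bddBelow_Icc.inter_of_left
  have hpσ : p < sInf S := hσ.1.1.lt_of_ne fun h => (h ▸ hp).not_ge hσ.2
  have hbefore : ∀ s ∈ Ico p (sInf S), f s < c := fun s hs => not_le.1 fun h =>
    (csInf_le bddBelow_Icc.inter_of_left ⟨⟨hs.1, hs.2.le.trans hσ.1.2⟩, h⟩).not_gt hs.2
  refine ⟨sInf S, ⟨hpσ, hσ.1.2⟩, le_antisymm (not_lt.1 fun hgt => ?_) hσ.2, hbefore⟩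
  obtain ⟨s, hs, hfs⟩ := intermediate_value_Ioo hpσ.le (hf.mono (Icc_subset_Icc le_rfl hσ.1.2))
    ⟨hp, hgt⟩
  exact (hbefore s ⟨hs.1.le, hs.2⟩).ne hfs

theorem Continuous.exists_initial_zero_interval {y : ℝ → ℝ} {u : ℝ} (hy : Continuous y)
    (hy0 : y 0 = 0) (hnn : ∀ t ∈ Icc 0 u, 0 ≤ y t) (hpos : ∃ t ∈ Icc 0 u, 0 < y t) :
    ∃ τ ∈ Ico 0 u, (∀ s ∈ Icc 0 τ, y s = 0) ∧ ∀ w > τ, ∃ s ∈ Ioo τ w, 0 < y s := by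
  set S := {t ∈ Icc 0 u | 0 < y t}
  obtain ⟨t₀, ht₀, hyt₀⟩ := hpos
  have hSne : S.Nonempty := ⟨t₀, ht₀, hyt₀⟩
  have hSbdd : BddBelow S := bddBelow_Icc.mono fun _ h => h.1
  set τ := sInf S
  have hτ0 : 0 ≤ τ := le_csInf hSne fun _ h => h.1.1
  have hτt₀ : τ ≤ t₀ := csInf_le hSbdd ⟨ht₀, hyt₀⟩
  have hbefore : ∀ s ∈ Ico 0 τ, y s = 0 := fun s hs => by
    have hsu : s ∈ Icc 0 u := ⟨hs.1, (hs.2.le.trans hτt₀).trans ht₀.2⟩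
    exact le_antisymm (not_lt.1 fun h => (csInf_le hSbdd ⟨hsu, h⟩).not_gt hs.2) (hnn s hsu)
  have hyτ : y τ = 0 := by
    rcases hτ0.eq_or_lt with h0 | hτpos
    · rw [← h0, hy0]
    · have hlim : Tendsto y (𝓝[<] τ) (𝓝 (y τ)) := hy.continuousWithinAt.tendsto
      refine tendsto_nhds_unique hlim (tendsto_const_nhds.congr' ?_)
      filter_upwards [Ico_mem_nhdsLT hτpos] with s hs using (hbefore s hs).symm
  have hzero : ∀ s ∈ Icc 0 τ, y s = 0 := fun s hs =>
    hs.2.eq_or_lt.elim (fun h => h ▸ hyτ) fun h => hbefore s ⟨hs.1, h⟩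
  refine ⟨τ, ⟨hτ0, (hτt₀.lt_of_ne fun h => (h ▸ hyτ).not_gt hyt₀).trans_le ht₀.2⟩, hzero, ?_⟩
  intro w hw
  obtain ⟨s, hsS, hsw⟩ := exists_lt_of_csInf_lt hSne hw
  have hτs : τ < s := (csInf_le hSbdd hsS).lt_of_ne (ne_of_apply_ne y (hyτ.trans_ne hsS.2.ne))
  exact ⟨s, ⟨hτs, hsw⟩, hsS.2⟩

theorem IntervalIntegrable.eventually_integral_lt {k : ℝ → ℝ} {τ u δ : ℝ}
    (hk : IntervalIntegrable k volume τ u) (hτu : τ < u) (hδ : 0 < δ) :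
    ∀ᶠ w in 𝓝[>] τ, w < u ∧ ∫ x in τ..w, k x < δ := by
  have hcont : ContinuousWithinAt (fun w => ∫ x in τ..w, k x) (Icc τ u) τ :=
    intervalIntegral.continuousWithinAt_primitive (measure_singleton τ)
      (by simpa [hτu.le] using hk)
  have hlim : Tendsto (fun w => ∫ x in τ..w, k x) (𝓝[>] τ) (𝓝 0) := by
    rw [← nhdsWithin_Ioo_eq_nhdsGT hτu]
    simpa using hcont.tendsto.mono_left (nhdsWithin_mono τ Ioo_subset_Icc_self)
  filter_upwards [Ioo_mem_nhdsGT hτu, hlim.eventually_lt_const hδ] with w hw hlt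
  exact ⟨hw.2, hlt⟩

theorem integral_mul_le_of_eqOn_zero_of_le {k y : ℝ → ℝ} {τ σ C s : ℝ} (hy : Continuous y)
    (hk : IntervalIntegrable k volume 0 σ) (hk0 : ∀ t, 0 ≤ k t) (hτ : τ ∈ Icc 0 σ)
    (hzero : ∀ t ∈ Icc 0 τ, y t = 0) (hle : ∀ t ∈ Icc τ σ, y t ≤ C) (hs : s ∈ Icc 0 σ) :
    ∫ x in 0..s, k x * y x ≤ C * ∫ x in τ..σ, k x := by
  have hkI : ∀ p ∈ Icc 0 σ, ∀ q ∈ Icc 0 σ, IntervalIntegrable k volume p q := fun p hp q hq =>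
    hk.mono_set (uIcc_subset_uIcc (mem_uIcc_of_le hp.1 hp.2) (mem_uIcc_of_le hq.1 hq.2))
  have hkyI : ∀ p ∈ Icc 0 σ, ∀ q ∈ Icc 0 σ, IntervalIntegrable (fun x => k x * y x) volume p q :=
    fun p hp q hq => (hkI p hp q hq).mul_continuousOn hy.continuousOn
  have hvanish : ∀ p ∈ Icc 0 τ, ∫ x in 0..p, k x * y x = 0 := fun p hp => by
    rw [intervalIntegral.integral_congr (g := fun _ => 0) fun x hx => ?_,
      intervalIntegral.integral_zero]
    rw [uIcc_of_le hp.1] at hx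
    simp [hzero x ⟨hx.1, hx.2.trans hp.2⟩]
  have hC : 0 ≤ C := (hzero τ ⟨hτ.1, le_rfl⟩).symm.le.trans (hle τ ⟨le_rfl, hτ.2⟩)
  have hkτσ : 0 ≤ ∫ x in τ..σ, k x := intervalIntegral.integral_nonneg hτ.2 fun x _ => hk0 x
  rcases le_total s τ with hsτ | hτs
  · rw [hvanish s ⟨hs.1, hsτ⟩]
    exact mul_nonneg hC hkτσ
  have h0 : (0 : ℝ) ∈ Icc 0 σ := ⟨le_rfl, hτ.1.trans hτ.2⟩
  calc ∫ x in 0..s, k x * y x = ∫ x in τ..s, k x * y x := by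
        rw [← intervalIntegral.integral_add_adjacent_intervals (hkyI 0 h0 τ hτ) (hkyI τ hτ s hs),
          hvanish τ ⟨hτ.1, le_rfl⟩, zero_add]
    _ ≤ ∫ x in τ..s, k x * C :=
        intervalIntegral.integral_mono_on hτs (hkyI τ hτ s hs) ((hkI τ hτ s hs).mul_const C)
          fun x hx => mul_le_mul_of_nonneg_left (hle x ⟨hx.1, hx.2.trans hs.2⟩) (hk0 x)
    _ = C * ∫ x in τ..s, k x := by rw [intervalIntegral.integral_mul_const, mul_comm]
    _ ≤ C * ∫ x in τ..σ, k x := mul_le_mul_of_nonneg_left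
        (intervalIntegral.integral_mono_interval le_rfl hτs hs.2 (ae_of_all _ fun x => hk0 x)
          (hkI τ hτ σ ⟨hτ.1.trans hτ.2, le_rfl⟩)) hC

theorem eventually_exists_hit_before_of_le_add_integral {y m k : ℝ → ℝ} {u c : ℝ}
    (hy : Continuous y) (hnn : ∀ t ∈ Icc 0 u, 0 ≤ y t) (hm0 : m 0 = 0) (hk0 : ∀ t, 0 ≤ k t)
    (hk : IntervalIntegrable k volume 0 u)
    (hineq : ∀ t ∈ Icc 0 u, y t ≤ m t + ∫ s in 0..t, k s * y s)
    (hpos : ∃ t ∈ Icc 0 u, 0 < y t) (hc : 0 < c) :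
    ∀ᶠ a in 𝓝[>] 0, ∃ σ ∈ Icc 0 u, a ≤ m σ ∧ ∀ s ∈ Icc 0 σ, -(c * a) < m s := by
  have hu : 0 ≤ u := let ⟨_, ht, _⟩ := hpos; ht.1.trans ht.2
  have hy0 : y 0 = 0 :=
    le_antisymm (by simpa [hm0] using hineq 0 ⟨le_rfl, hu⟩) (hnn 0 ⟨le_rfl, hu⟩)
  obtain ⟨τ, hτ, hzero, hposτ⟩ := hy.exists_initial_zero_interval hy0 hnn hpos
  have hkτ : IntervalIntegrable k volume τ u :=
    hk.mono_set (uIcc_subset_uIcc (mem_uIcc_of_le hτ.1 hτ.2.le) right_mem_uIcc)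
  -- `y ≤ 2a` up to `σ` bounds the integral term by `2a ∫ k`; so `∫ k < 1/2` gives
  -- `m σ ≥ 2a - a`, and `∫ k < c/2` gives `m > -c a` on `[0, σ]`.
  obtain ⟨w, ⟨hwu, hkw⟩, hτw⟩ := ((hkτ.eventually_integral_lt hτ.2
    (lt_min one_half_pos (half_pos hc))).and self_mem_nhdsWithin).exists
  obtain ⟨s₁, hs₁, hys₁⟩ := hposτ w hτw
  filter_upwards [Ioc_mem_nhdsGT (half_pos hys₁)] with a ha
  obtain ⟨σ, hσ, hyσ, hbelow⟩ := hy.continuousOn.exists_mem_Ioc_eq_and_forall_lt (c := 2 * a)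
    hs₁.1.le (by rw [hzero τ ⟨hτ.1, le_rfl⟩]; linarith [ha.1]) (by linarith [ha.2])
  have hσ0 : 0 ≤ σ := hτ.1.trans hσ.1.le
  have hσw : σ ≤ w := hσ.2.trans hs₁.2.le
  have hσu : σ ≤ u := hσw.trans hwu.le
  have hbound : ∀ s ∈ Icc 0 σ, ∫ x in 0..s, k x * y x ≤ 2 * a * ∫ x in τ..w, k x := by
    intro s hs
    refine (integral_mul_le_of_eqOn_zero_of_le hy (hk.mono_set ?_) hk0 ⟨hτ.1, hσ.1.le⟩ hzero
      (fun t ht => ?_) hs).trans (mul_le_mul_of_nonneg_left ?_ (by linarith [ha.1]))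
    · exact uIcc_subset_uIcc left_mem_uIcc (mem_uIcc_of_le hσ0 hσu)
    · rcases ht.2.eq_or_lt with h | h
      · rw [h, hyσ]
      · exact (hbelow t ⟨ht.1, h⟩).le
    · exact intervalIntegral.integral_mono_interval le_rfl hσ.1.le hσw
        (ae_of_all _ fun x => hk0 x) (hkτ.mono_set (uIcc_subset_uIcc left_mem_uIcc
          (mem_uIcc_of_le hτw.le hwu.le)))
  rw [lt_min_iff] at hkw
  refine ⟨σ, ⟨hσ0, hσu⟩, ?_, fun s hs => ?_⟩
  · have hmσ := hineq σ ⟨hσ0, hσu⟩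
    have hIσ := hbound σ ⟨hσ0, le_rfl⟩
    nlinarith [mul_lt_mul_of_pos_left hkw.1 ha.1]
  · have hms := hineq s ⟨hs.1, hs.2.trans hσu⟩
    have hIs := hbound s hs
    have hys := hnn s ⟨hs.1, hs.2.trans hσu⟩
    nlinarith [mul_lt_mul_of_pos_left hkw.2 ha.1]

noncomputable def dyadicCeil (n : ℕ) (x : ℝ) : ℝ := ⌈x * 2 ^ n⌉ / 2 ^ n

section DyadicCeil

variable (n : ℕ) (x : ℝ)

theorem le_dyadicCeil : x ≤ dyadicCeil n x := by
  rw [dyadicCeil, le_div_iff₀ (by positivity)]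
  exact Int.le_ceil _

theorem dyadicCeil_lt : dyadicCeil n x < x + 1 / 2 ^ n := by
  rw [dyadicCeil, div_lt_iff₀ (by positivity), add_mul, one_div_mul_cancel (by positivity)]
  exact Int.ceil_lt_add_one _

theorem dyadicCeil_le_iff {t : ℝ} : dyadicCeil n x ≤ t ↔ x ≤ ⌊t * 2 ^ n⌋ / 2 ^ n := by
  rw [dyadicCeil, div_le_iff₀ (by positivity), le_div_iff₀ (by positivity), ← Int.ceil_le,
    ← Int.le_floor]

theorem tendsto_dyadicCeil : Tendsto (dyadicCeil · x) atTop (𝓝[≥] x) := by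
  refine tendsto_nhdsWithin_iff.2 ⟨?_, Eventually.of_forall fun n => le_dyadicCeil n x⟩
  have hupper : Tendsto (fun n : ℕ => x + 1 / 2 ^ n) atTop (𝓝 x) := by
    simpa using tendsto_const_nhds.add (tendsto_const_nhds (x := (1 : ℝ)).div_atTop
      (tendsto_pow_atTop_atTop_of_one_lt one_lt_two))
  exact tendsto_of_tendsto_of_tendsto_of_le_of_le tendsto_const_nhds hupper
    (le_dyadicCeil · x) fun n => (dyadicCeil_lt n x).le

theorem countable_range_dyadicCeil : (range (dyadicCeil n)).Countable :=
  (countable_range fun z : ℤ => (z : ℝ) / 2 ^ n).mono <| by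
    rintro _ ⟨x, rfl⟩
    exact ⟨⌈x * 2 ^ n⌉, rfl⟩

end DyadicCeil

namespace MeasureTheory

variable {Ω : Type*} {m0 : MeasurableSpace Ω} {μ : Measure Ω} {ℱ : Filtration ℝ m0}

theorem measure_ge_le_of_integral_eq_zero [IsProbabilityMeasure μ] {X : Ω → ℝ} {a b : ℝ}
    (hX : Integrable X μ) (hX0 : ∫ ω, X ω ∂μ = 0) (hXb : ∀ᵐ ω ∂μ, -b ≤ X ω) (hab : 0 < a + b) :
    μ {ω | a ≤ X ω} ≤ ENNReal.ofReal (b / (a + b)) := by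
  have hmarkov := mul_meas_ge_le_integral_of_nonneg (f := fun ω => X ω + b)
    (hXb.mono fun ω h => by simp only [Pi.zero_apply]; linarith) (hX.add (integrable_const b))
    (a + b)
  simp only [add_le_add_iff_right, integral_add hX (integrable_const b), hX0, integral_const,
    probReal_univ, smul_eq_mul, one_mul, zero_add] at hmarkov
  have hb : 0 ≤ b := (mul_nonneg hab.le measureReal_nonneg).trans hmarkov
  rw [ENNReal.le_ofReal_iff_toReal_le (measure_ne_top _ _) (div_nonneg hb hab.le),
    le_div_iff₀ hab, mul_comm]
  exact hmarkov

theorem measure_setOf_eventually_mem_le {ι : Type*} {l : Filter ι} [l.IsCountablyGenerated]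
    [l.NeBot] {E : ι → Set Ω} {r : ENNReal} (h : ∀ᶠ i in l, μ (E i) ≤ r) :
    μ {ω | ∀ᶠ i in l, ω ∈ E i} ≤ r := by
  obtain ⟨s, hs⟩ := l.exists_antitone_basis
  have hunion : {ω | ∀ᶠ i in l, ω ∈ E i} = ⋃ n, ⋂ i ∈ s n, E i := by
    ext ω; simp [hs.eventually_iff]
  rw [hunion, Monotone.measure_iUnion fun m n hmn => biInter_subset_biInter_left (hs.antitone hmn)]
  refine iSup_le fun n => ?_
  obtain ⟨i, hi, hin⟩ := (h.and (hs.mem n)).exists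
  exact (measure_mono (biInter_subset_of_mem hin)).trans hi

section Hitting

variable {ι β : Type*} [ConditionallyCompleteLinearOrder ι] [TopologicalSpace ι] [OrderTopology ι]
  [TopologicalSpace β] {X : ι → Ω → β} {F : Set β} {n m t : ι} {ω : Ω}

theorem hittingBtwn_mem_of_isClosed (hF : IsClosed F) (hX : Continuous (X · ω))
    (h : ∃ s ∈ Icc n m, X s ω ∈ F) : X (hittingBtwn X F n m ω) ω ∈ F := by
  have hclosed : IsClosed (Icc n m ∩ {s | X s ω ∈ F}) := isClosed_Icc.inter (hF.preimage hX)
  rw [hittingBtwn, if_pos h]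
  obtain ⟨s, hs, hsF⟩ := h
  exact (hclosed.csInf_mem ⟨s, hs, hsF⟩ bddBelow_Icc.inter_of_left).2

theorem hittingBtwn_le_iff_of_isClosed (hF : IsClosed F) (hX : Continuous (X · ω)) (ht : t < m) :
    hittingBtwn X F n m ω ≤ t ↔ ∃ s ∈ Icc n t, X s ω ∈ F := by
  constructor
  · intro hle
    have hhit : ∃ s ∈ Icc n m, X s ω ∈ F := by
      by_contra hno
      rw [hittingBtwn, if_neg hno] at hle
      exact ht.not_ge hle
    refine ⟨_, ⟨?_, hle⟩, hittingBtwn_mem_of_isClosed hF hX hhit⟩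
    obtain ⟨s, hs, -⟩ := hhit
    exact le_hittingBtwn (hs.1.trans hs.2) ω
  · rintro ⟨s, hs, hsF⟩
    exact (hittingBtwn_le_of_mem hs.1 (hs.2.trans ht.le) hsF).trans hs.2

theorem hittingBtwn_mem_of_compl_subset [DenselyOrdered ι] [NoMinOrder ι] {U : Set β}
    (hU : IsClosed U) (hFU : Fᶜ ⊆ U) (hX : Continuous (X · ω)) (hn : X n ω ∈ U) (hnm : n ≤ m) :
    X (hittingBtwn X F n m ω) ω ∈ U := by
  rcases (le_hittingBtwn hnm ω).eq_or_lt with h | h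
  · rwa [← h]
  · have hlim : Tendsto (X · ω) (𝓝[<] hittingBtwn X F n m ω)
        (𝓝 (X (hittingBtwn X F n m ω) ω)) := hX.continuousWithinAt.tendsto
    refine hU.mem_of_tendsto hlim ?_
    filter_upwards [Ico_mem_nhdsLT h] with s hs
    exact hFU (notMem_of_lt_hittingBtwn hs.2 hs.1)

end Hitting

section Adapted

variable {β : Type*} [PseudoMetricSpace β] [MeasurableSpace β] [OpensMeasurableSpace β]
  {X : ℝ → Ω → β} {F : Set β}

theorem Adapted.measurableSet_exists_mem_Icc_mem (hX : Adapted ℱ X)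
    (hXc : ∀ ω, Continuous (X · ω)) (hF : IsClosed F) (n t : ℝ) :
    MeasurableSet[ℱ t] {ω | ∃ s ∈ Icc n t, X s ω ∈ F} := by
  obtain ⟨D, hDc, hD⟩ := TopologicalSpace.exists_countable_dense (Icc n t)
  have hset : {ω | ∃ s ∈ Icc n t, X s ω ∈ F} =
      ⋂ k : ℕ, ⋃ q ∈ D, {ω | X q ω ∈ Metric.thickening (1 / (k + 1)) F} := by
    ext ω
    simp only [mem_ofPred_eq, mem_iInter, mem_iUnion, exists_prop]
    constructor
    · rintro ⟨s, hs, hsF⟩ k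
      have hopen : IsOpen {r : Icc n t | X r ω ∈ Metric.thickening (1 / (k + 1)) F} :=
        Metric.isOpen_thickening.preimage ((hXc ω).comp continuous_subtype_val)
      exact hD.exists_mem_open hopen ⟨⟨s, hs⟩, Metric.self_subset_thickening (by positivity) F hsF⟩
    · intro h
      obtain ⟨q₀, -, -⟩ := h 0
      have hcont : Continuous fun s => Metric.infEDist (X s ω) F :=
        Metric.continuous_infEDist.comp (hXc ω)
      obtain ⟨s, hs, hmin⟩ := (isCompact_Icc (a := n) (b := t)).exists_isMinOn ⟨_, q₀.2⟩
        hcont.continuousOn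
      refine ⟨s, hs, hF.closure_subset (Metric.mem_closure_iff_infEDist_zero.2 ?_)⟩
      refine le_antisymm (ENNReal.le_of_forall_pos_le_add fun ε hε _ => ?_) zero_le
      obtain ⟨k, hk⟩ := exists_nat_one_div_lt hε
      obtain ⟨q, -, hq⟩ := h k
      rw [Metric.mem_thickening_iff_infEDist_lt] at hq
      calc Metric.infEDist (X s ω) F ≤ Metric.infEDist (X q ω) F := hmin q.2
        _ ≤ ENNReal.ofReal (1 / (k + 1)) := hq.le
        _ ≤ 0 + ε := by
          rw [zero_add, ← ENNReal.ofReal_coe_nnreal]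
          exact ENNReal.ofReal_le_ofReal hk.le
  rw [hset]
  refine MeasurableSet.iInter fun k => MeasurableSet.biUnion hDc fun q _ => ?_
  exact ℱ.mono q.2.2 _ ((hX q).mono le_rfl le_rfl Metric.isOpen_thickening.measurableSet)

theorem Adapted.isStoppingTime_hittingBtwn_of_isClosed (hX : Adapted ℱ X)
    (hXc : ∀ ω, Continuous (X · ω)) (hF : IsClosed F) (n m : ℝ) :
    IsStoppingTime ℱ fun ω => ((hittingBtwn X F n m ω : ℝ) : WithTop ℝ) := by
  intro t
  simp only [WithTop.coe_le_coe]
  rcases lt_or_ge t m with ht | ht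
  · simp only [hittingBtwn_le_iff_of_isClosed hF (hXc _) ht]
    exact hX.measurableSet_exists_mem_Icc_mem hXc hF n t
  · simp only [(hittingBtwn_le _).trans ht, ofPred_true, MeasurableSet.univ]

end Adapted

theorem IsStoppingTime.dyadicCeil {τ : Ω → ℝ}
    (hτ : IsStoppingTime ℱ fun ω => (τ ω : WithTop ℝ)) (n : ℕ) :
    IsStoppingTime ℱ fun ω => (dyadicCeil n (τ ω) : WithTop ℝ) := by
  intro t
  simp only [WithTop.coe_le_coe, dyadicCeil_le_iff]
  have hfloor : (⌊t * 2 ^ n⌋ : ℝ) / 2 ^ n ≤ t := (div_le_iff₀ (by positivity)).2 (Int.floor_le _)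
  exact ℱ.mono hfloor _ (by simpa using hτ (⌊t * 2 ^ n⌋ / 2 ^ n))

section Martingale

variable {M : ℝ → Ω → ℝ}

theorem Martingale.integral_eq_of_le [IsFiniteMeasure μ] (hM : Martingale M ℱ μ) {i j : ℝ}
    (hij : i ≤ j) : ∫ ω, M i ω ∂μ = ∫ ω, M j ω ∂μ := by
  simpa using hM.setIntegral_eq hij MeasurableSet.univ

theorem Martingale.integrable_and_integral_eq_of_isStoppingTime
    [IsFiniteMeasure μ] {τ : Ω → ℝ} {u : ℝ} (hM : Martingale M ℱ μ)
    (hMc : ∀ ω t, ContinuousWithinAt (M · ω) (Ici t) t)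
    (hτ : IsStoppingTime ℱ fun ω => (τ ω : WithTop ℝ)) (hτu : ∀ ω, τ ω ≤ u) :
    Integrable (fun ω => M (τ ω) ω) μ ∧ ∫ ω, M (τ ω) ω ∂μ = ∫ ω, M u ω ∂μ := by
  have hst (n : ℕ) := hτ.dyadicCeil n
  have hle (n : ℕ) (ω : Ω) : (dyadicCeil n (τ ω) : WithTop ℝ) ≤ ↑(u + 1) := by
    refine WithTop.coe_le_coe.2 ((dyadicCeil_lt n (τ ω)).le.trans (add_le_add (hτu ω) ?_))
    exact div_le_one_of_le₀ (one_le_pow₀ one_le_two) (by positivity)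
  have hcondExp (n : ℕ) : (fun ω => M (dyadicCeil n (τ ω)) ω) =ᵐ[μ]
      μ[M (u + 1) | (hst n).measurableSpace] := by
    have hrange : (range fun ω => (dyadicCeil n (τ ω) : WithTop ℝ)).Countable :=
      ((countable_range_dyadicCeil n).image (↑)).mono <| by
        rintro _ ⟨ω, rfl⟩
        exact ⟨_, ⟨τ ω, rfl⟩, rfl⟩
    exact hM.stoppedValue_ae_eq_condExp_of_le_const_of_countable_range (hst n) (hle n) hrange
  have hUI : UniformIntegrable (fun n ω => M (dyadicCeil n (τ ω)) ω) 1 μ :=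
    ((hM.integrable (u + 1)).uniformIntegrable_condExp fun n =>
      (hst n).measurableSpace_le_of_le (hle n)).ae_eq fun n => (hcondExp n).symm
  have hlim : ∀ᵐ ω ∂μ, Tendsto (fun n => M (dyadicCeil n (τ ω)) ω) atTop (𝓝 (M (τ ω) ω)) :=
    ae_of_all _ fun ω => (hMc ω (τ ω)).tendsto.comp (tendsto_dyadicCeil (τ ω))
  have hint : Integrable (fun ω => M (τ ω) ω) μ := hUI.integrable_of_ae_tendsto hlim
  have hintegral (n : ℕ) : ∫ ω, M (dyadicCeil n (τ ω)) ω ∂μ = ∫ ω, M (u + 1) ω ∂μ := by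
    rw [integral_congr_ae (hcondExp n),
      integral_condExp ((hst n).measurableSpace_le_of_le (hle n))]
  have hL1 := tendsto_Lp_finite_of_tendsto_ae le_rfl ENNReal.one_ne_top (fun n => hUI.1 n)
    (memLp_one_iff_integrable.2 hint) hUI.2.1 hlim
  have htendsto := tendsto_integral_of_L1' _ hint.aestronglyMeasurable
    (Eventually.of_forall fun n => memLp_one_iff_integrable.1 (hUI.memLp n)) hL1
  simp only [hintegral] at htendsto
  refine ⟨hint, (tendsto_nhds_unique htendsto tendsto_const_nhds).trans ?_⟩
  exact (hM.integral_eq_of_le (le_add_of_nonneg_right zero_le_one)).symm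

theorem Martingale.measure_hits_before_le [IsProbabilityMeasure μ] (hM : Martingale M ℱ μ)
    (hMc : ∀ ω, Continuous (M · ω)) (hM0 : ∀ ω, M 0 ω = 0) {a b u : ℝ} (ha : 0 < a) (hb : 0 ≤ b)
    (hu : 0 ≤ u) :
    μ {ω | ∃ σ ∈ Icc 0 u, a ≤ M σ ω ∧ ∀ s ∈ Icc 0 σ, -b < M s ω} ≤
      ENNReal.ofReal (b / (a + b)) := by
  set F : Set ℝ := {x | x ≤ -b ∨ a ≤ x}
  have hF : IsClosed F := (isClosed_le continuous_id continuous_const).union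
    (isClosed_le continuous_const continuous_id)
  set τ := hittingBtwn M F 0 u
  have hτ : IsStoppingTime ℱ fun ω => (τ ω : WithTop ℝ) :=
    hM.stronglyAdapted.adapted.isStoppingTime_hittingBtwn_of_isClosed hMc hF 0 u
  obtain ⟨hint, hintegral⟩ := hM.integrable_and_integral_eq_of_isStoppingTime
    (fun ω _ => (hMc ω).continuousWithinAt) hτ hittingBtwn_le
  have hτ0 : ∀ ω, 0 ≤ τ ω := le_hittingBtwn hu
  have hmean : ∫ ω, M (τ ω) ω ∂μ = 0 := by
    rw [hintegral, ← hM.integral_eq_of_le hu]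
    simp [hM0]
  have hexit (ω : Ω) : -b ≤ M (τ ω) ω := by
    refine hittingBtwn_mem_of_compl_subset (U := Ici (-b)) isClosed_Ici (fun x hx => ?_) (hMc ω)
      ?_ hu
    · simp only [F, mem_compl_iff, mem_ofPred_eq, not_or, not_le] at hx
      exact hx.1.le
    · rw [mem_Ici, hM0]
      linarith
  refine (measure_mono fun ω hω => ?_).trans
    (measure_ge_le_of_integral_eq_zero hint hmean (ae_of_all _ hexit) (by linarith))
  obtain ⟨σ, hσ, haσ, hσpos⟩ := hω
  have hτσ : τ ω ≤ σ := hittingBtwn_le_of_mem hσ.1 hσ.2 (Or.inr haσ)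
  exact (hittingBtwn_mem_of_isClosed hF (hMc ω) ⟨σ, hσ, Or.inr haσ⟩).resolve_left
    (hσpos _ ⟨hτ0 ω, hτσ⟩).not_ge

end Martingale

end MeasureTheory

theorem nonneg_dominated_by_martingale_eq_zero_general
    {Ω : Type*} {m0 : MeasurableSpace Ω} {μ : Measure Ω} [IsProbabilityMeasure μ]
    (ℱ : Filtration ℝ m0) (M y K : ℝ → Ω → ℝ)
    (hM : Martingale M ℱ μ) (hMcont : ∀ ω, Continuous fun t => M t ω)
    (hM0 : ∀ ω, M 0 ω = 0)
    (hycont : ∀ ω, Continuous fun t => y t ω)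
    (hynn : ∀ t ω, 0 ≤ t → 0 ≤ y t ω)
    (hKnn : ∀ t ω, 0 ≤ K t ω)
    (hKint : ∀ ω, ∀ T ≥ (0:ℝ), IntervalIntegrable (fun s => K s ω) volume 0 T)
    (hineq : ∀ᵐ ω ∂μ, ∀ t ≥ (0:ℝ), y t ω ≤ M t ω + ∫ s in (0:ℝ)..t, K s ω * y s ω) :
    ∀ᵐ ω ∂μ, ∀ t ≥ (0:ℝ), y t ω = 0 := by
  have hnull (T : ℕ) : μ {ω | ∃ t ∈ Icc 0 (T : ℝ), 0 < y t ω} = 0 := by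
    refine le_antisymm (ENNReal.le_of_forall_pos_le_add fun c hc _ => ?_) zero_le
    have hc' : (0 : ℝ) < c := hc
    calc μ {ω | ∃ t ∈ Icc 0 (T : ℝ), 0 < y t ω}
        ≤ μ {ω | ∀ᶠ a in 𝓝[>] 0,
            ω ∈ {ω | ∃ σ ∈ Icc 0 (T : ℝ), a ≤ M σ ω ∧ ∀ s ∈ Icc 0 σ, -(c * a) < M s ω}} := by
          refine measure_mono_ae ?_
          filter_upwards [hineq] with ω hω hpos
          exact eventually_exists_hit_before_of_le_add_integral (hycont ω)
            (fun t ht => hynn t ω ht.1) (hM0 ω) (hKnn · ω) (hKint ω T T.cast_nonneg)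
            (fun t ht => hω t ht.1) hpos hc'
      _ ≤ 0 + c := by
          refine measure_setOf_eventually_mem_le
            (eventually_mem_nhdsWithin.mono fun a (ha : 0 < a) => ?_)
          refine (hM.measure_hits_before_le hMcont hM0 ha (by positivity) T.cast_nonneg).trans ?_
          rw [zero_add, ← ENNReal.ofReal_coe_nnreal]
          refine ENNReal.ofReal_le_ofReal ((div_le_iff₀ (by positivity)).2 ?_)
          nlinarith [mul_pos hc' (mul_pos hc' ha)]
  filter_upwards [measure_eq_zero_iff_ae_notMem.1 (measure_iUnion_null hnull)] with ω hω t ht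
  refine le_antisymm (not_lt.1 fun hpos => hω ?_) (hynn t ω ht)
  exact mem_iUnion.2 ⟨⌈t⌉₊, t, ⟨ht, Nat.le_ceil t⟩, hpos⟩

/-- Gronwall-type lemma with a martingale: if `y ≥ 0` is continuous adapted, `M` is a
continuous martingale with `M 0 = 0`, `K ≥ 0` is locally integrable, and a.s.
`y_t ≤ M_t + ∫_0^t K_s y_s ds` for all `t ≥ 0`, then a.s. `y_t = 0` for all `t ≥ 0`. -/
theorem nonneg_dominated_by_martingale_eq_zero
    {Ω : Type*} {m0 : MeasurableSpace Ω} {μ : Measure Ω} [IsProbabilityMeasure μ]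
    (ℱ : Filtration ℝ m0) (M y K : ℝ → Ω → ℝ)
    (hM : Martingale M ℱ μ) (hMcont : ∀ ω, Continuous fun t => M t ω)
    (hM0 : ∀ ω, M 0 ω = 0)
    (hy : Adapted ℱ y) (hycont : ∀ ω, Continuous fun t => y t ω)
    (hynn : ∀ t ω, 0 ≤ t → 0 ≤ y t ω)
    (hKad : Adapted ℱ K) (hKnn : ∀ t ω, 0 ≤ K t ω)
    (hKint : ∀ ω, ∀ T ≥ (0:ℝ), IntervalIntegrable (fun s => K s ω) volume 0 T)
    (hineq : ∀ᵐ ω ∂μ, ∀ t ≥ (0:ℝ), y t ω ≤ M t ω + ∫ s in (0:ℝ)..t, K s ω * y s ω) :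
    ∀ᵐ ω ∂μ, ∀ t ≥ (0:ℝ), y t ω = 0 :=
  nonneg_dominated_by_martingale_eq_zero_general ℱ M y K hM hMcont hM0 hycont hynn hKnn hKint hineq
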